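/- For integers k ≥ 1, α > 2, s > 0, r > 0: ∫_r^∞ (1 − (1 − 1/(1 + v^α/s))^k) v dv = (r²/2)·Σ_{l=1}^k C(k,l)(−1)^{l+1} 𝔷(θ,α,l), where s = θ r^α and 𝔷(θ,α,l) = (2θ^l/(lα−2))·₂F₁(l, l−2/α; l−2/α+1; −θ). -/

import Mathlib

open Real MeasureTheory

noncomputable def hyp2F1 (a b c z : ℝ) : ℝ :=
  (Real.Gamma c / (Real.Gamma b * Real.Gamma (c - b))) *
    ∫ t in Set.Ioo (0 : ℝ) 1, t ^ (b - 1) * (1 - t) ^ (c - b - 1) * (1 - z * t) ^ (-a)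

/-- `𝔷(θ,α,l) = (2θ^l/(lα−2))·₂F₁(l, l−2/α; l−2/α+1; −θ)`. -/
noncomputable def zFunL (θ α : ℝ) (l : ℕ) : ℝ :=
  2 * θ ^ l / (l * α - 2) * hyp2F1 l (l - 2 / α) (l - 2 / α + 1) (-θ)

/-! Expanding `1 - (1 - x)^k` binomially reduces the claim to the integrals
`∫_r^∞ (1 + v^α/s)^(-l) v dv`. The substitution `v = r t^(-1/α)` maps `(0, 1)` onto `(r, ∞)` and
turns each of them into `(r²θ^l/α) ∫_0^1 t^(l-2/α-1) (1 + θt)^(-l) dt`, which is Euler's integral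
for `₂F₁(l, b; b+1; -θ)` with `b = l - 2/α`; for `c = b + 1` the Gamma prefactor of Euler's
formula collapses to `b`. -/

open Set

theorem one_sub_one_sub_pow_eq_sum {R : Type*} [CommRing R] (k : ℕ) (x : R) :
    1 - (1 - x) ^ k = ∑ l ∈ Finset.Icc 1 k, (k.choose l : R) * (-1) ^ (l + 1) * x ^ l := by
  have hrange : Finset.range (k + 1) = insert 0 (Finset.Icc 1 k) := by
    ext m; simp only [Finset.mem_range, Finset.mem_insert, Finset.mem_Icc]; omega
  rw [sub_eq_add_neg (1 : R) x, add_comm (1 : R), add_pow, hrange, Finset.sum_insert (by simp),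
    ← sub_sub]
  simp only [pow_zero, one_pow, mul_one, Nat.choose_zero_right, Nat.cast_one, sub_self,
    zero_sub, ← Finset.sum_neg_distrib, neg_pow x, pow_succ]
  exact Finset.sum_congr rfl fun l _ => by ring

theorem hyp2F1_self_add_one (a z : ℝ) {b : ℝ} (hb : 0 < b) :
    hyp2F1 a b (b + 1) z = b * ∫ t in Ioo (0 : ℝ) 1, t ^ (b - 1) * (1 - z * t) ^ (-a) := by
  rw [hyp2F1, add_sub_cancel_left, Gamma_one, mul_one, Gamma_add_one hb.ne',
    mul_div_cancel_right₀ _ (Gamma_pos_of_pos hb).ne', sub_self]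
  simp only [rpow_zero, mul_one]

theorem zFunL_eq_integral (l : ℕ) (hl : 1 ≤ l) {α : ℝ} (hα : 2 < α) (θ : ℝ) :
    zFunL θ α l = 2 * θ ^ l / α *
      ∫ t in Ioo (0 : ℝ) 1, t ^ ((l : ℝ) - 2 / α - 1) * (1 + θ * t) ^ (-(l : ℝ)) := by
  have hα₀ : 0 < α := by linarith
  have hl₁ : (1 : ℝ) ≤ l := by exact_mod_cast hl
  have hb : 0 < (l : ℝ) - 2 / α := by linarith [(div_lt_one hα₀).mpr hα]
  have hlα : (l : ℝ) * α - 2 ≠ 0 := by nlinarith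
  simp only [zFunL, hyp2F1_self_add_one _ _ hb, neg_mul, sub_neg_eq_add]
  field_simp

theorem integrableOn_rpow_mul_one_add_mul_rpow_neg {a : ℝ} (ha : -1 < a) {θ : ℝ} (hθ : 0 ≤ θ)
    {c : ℝ} (hc : 0 ≤ c) :
    IntegrableOn (fun t : ℝ => t ^ a * (1 + θ * t) ^ (-c)) (Ioo 0 1) := by
  have hpow : IntegrableOn (fun t : ℝ => t ^ a) (Ioo 0 1) :=
    (intervalIntegral.intervalIntegrable_rpow' ha (a := 0) (b := 1)).1.mono_set
      Ioo_subset_Ioc_self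
  refine hpow.mono' (by fun_prop) ((ae_restrict_iff' measurableSet_Ioo).mpr
    (ae_of_all _ fun t ht => ?_))
  rw [norm_of_nonneg (by have := ht.1; positivity)]
  exact mul_le_of_le_one_right (rpow_nonneg ht.1.le _)
    (rpow_le_one_of_one_le_of_nonpos (le_add_of_nonneg_right (by have := ht.1; positivity))
      (neg_nonpos.mpr hc))

section RpowSubstitution

variable {α r : ℝ}

theorem hasDerivAt_mul_rpow_neg_inv {t : ℝ} (ht : 0 < t) :
    HasDerivAt (fun t : ℝ => r * t ^ (-1 / α)) (-(r / α * t ^ (-1 / α - 1))) t := by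
  exact ((hasDerivAt_rpow_const (Or.inl ht.ne')).const_mul r).congr_deriv (by ring)

theorem injOn_mul_rpow_neg_inv (hα : α ≠ 0) (hr : r ≠ 0) :
    InjOn (fun t : ℝ => r * t ^ (-1 / α)) (Ioi 0) := by
  intro t₁ ht₁ t₂ ht₂ h
  have h' : t₁ ^ (-1 / α) = t₂ ^ (-1 / α) := mul_left_cancel₀ hr h
  have hα' : -1 / α ≠ 0 := by simpa using hα
  have := congrArg (· ^ (-1 / α)⁻¹) h'
  rwa [rpow_rpow_inv (le_of_lt ht₁) hα', rpow_rpow_inv (le_of_lt ht₂) hα'] at this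

theorem image_mul_rpow_neg_inv_Ioo (hα : 0 < α) (hr : 0 < r) :
    (fun t : ℝ => r * t ^ (-1 / α)) '' Ioo 0 1 = Ioi r := by
  ext v
  simp only [mem_image, mem_Ioo, mem_Ioi]
  constructor
  · rintro ⟨t, ⟨ht₀, ht₁⟩, rfl⟩
    have : 1 < t ^ (-1 / α) :=
      (one_lt_rpow_iff_of_pos ht₀).mpr (Or.inr ⟨ht₁, div_neg_of_neg_of_pos (by norm_num) hα⟩)
    nlinarith
  · intro hv
    have hv₀ : 0 < v := hr.trans hv
    refine ⟨(r / v) ^ α, ⟨by positivity,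
      rpow_lt_one (div_pos hr hv₀).le ((div_lt_one hv₀).mpr hv) hα⟩, ?_⟩
    rw [← rpow_mul (div_pos hr hv₀).le, mul_div_cancel₀ _ hα.ne', rpow_neg_one]
    field_simp

private theorem abs_deriv_mul_rpow_neg_inv (hα : 0 < α) (hr : 0 < r) {t : ℝ} (ht : 0 < t) :
    |-(r / α * t ^ (-1 / α - 1))| = r / α * t ^ (-1 / α - 1) := by
  rw [abs_neg, abs_of_nonneg (by positivity)]

theorem integrableOn_Ioi_iff_rpow_subst (hα : 0 < α) (hr : 0 < r) (g : ℝ → ℝ) :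
    IntegrableOn g (Ioi r) ↔
      IntegrableOn (fun t => r / α * t ^ (-1 / α - 1) * g (r * t ^ (-1 / α))) (Ioo 0 1) := by
  rw [← image_mul_rpow_neg_inv_Ioo hα hr,
    integrableOn_image_iff_integrableOn_abs_deriv_smul measurableSet_Ioo
      (fun t ht => (hasDerivAt_mul_rpow_neg_inv ht.1).hasDerivWithinAt)
      ((injOn_mul_rpow_neg_inv hα.ne' hr.ne').mono Ioo_subset_Ioi_self)]
  refine integrableOn_congr_fun (fun t ht => ?_) measurableSet_Ioo
  simp only [smul_eq_mul, abs_deriv_mul_rpow_neg_inv hα hr ht.1]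

theorem integral_Ioi_eq_rpow_subst (hα : 0 < α) (hr : 0 < r) (g : ℝ → ℝ) :
    ∫ v in Ioi r, g v = ∫ t in Ioo 0 1, r / α * t ^ (-1 / α - 1) * g (r * t ^ (-1 / α)) := by
  rw [← image_mul_rpow_neg_inv_Ioo hα hr,
    integral_image_eq_integral_abs_deriv_smul measurableSet_Ioo
      (fun t ht => (hasDerivAt_mul_rpow_neg_inv ht.1).hasDerivWithinAt)
      ((injOn_mul_rpow_neg_inv hα.ne' hr.ne').mono Ioo_subset_Ioi_self)]
  refine setIntegral_congr_fun measurableSet_Ioo (fun t ht => ?_)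
  simp only [smul_eq_mul, abs_deriv_mul_rpow_neg_inv hα hr ht.1]

end RpowSubstitution

section Kernel

variable {α θ r : ℝ}

theorem rpow_subst_one_div_one_add_rpow_div_pow_mul (hα : 0 < α) (hθ : 0 < θ) (hr : 0 < r)
    (l : ℕ) {t : ℝ} (ht : 0 < t) :
    r / α * t ^ (-1 / α - 1) *
        ((1 / (1 + (r * t ^ (-1 / α)) ^ α / (θ * r ^ α))) ^ l * (r * t ^ (-1 / α))) =
      r ^ 2 * θ ^ l / α * (t ^ ((l : ℝ) - 2 / α - 1) * (1 + θ * t) ^ (-(l : ℝ))) := by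
  have hpow : (r * t ^ (-1 / α)) ^ α = r ^ α / t := by
    rw [mul_rpow hr.le (rpow_nonneg ht.le _), ← rpow_mul ht.le, div_mul_cancel₀ _ hα.ne',
      rpow_neg_one, div_eq_mul_inv]
  have hfrac : 1 / (1 + r ^ α / t / (θ * r ^ α)) = θ * t / (1 + θ * t) := by
    field_simp
    ring
  have hexp : t ^ ((l : ℝ) - 2 / α - 1) = t ^ l * (t ^ (-1 / α - 1) * t ^ (-1 / α)) := by
    rw [← rpow_natCast, ← rpow_add ht, ← rpow_add ht]
    ring_nf
  rw [hpow, hfrac, hexp, rpow_neg (by positivity), rpow_natCast, div_pow, mul_pow]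
  field_simp

theorem integrableOn_one_div_one_add_rpow_div_pow_mul (l : ℕ) (hl : 1 ≤ l) (hα : 2 < α)
    (hθ : 0 < θ) (hr : 0 < r) :
    IntegrableOn (fun v : ℝ => (1 / (1 + v ^ α / (θ * r ^ α))) ^ l * v) (Ioi r) := by
  have hα₀ : 0 < α := by linarith
  have hl₁ : (1 : ℝ) ≤ l := by exact_mod_cast hl
  have ha : -1 < (l : ℝ) - 2 / α - 1 := by linarith [(div_lt_one hα₀).mpr hα]
  rw [integrableOn_Ioi_iff_rpow_subst hα₀ hr]
  refine IntegrableOn.congr_fun ((integrableOn_rpow_mul_one_add_mul_rpow_neg ha hθ.le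
    (Nat.cast_nonneg l)).const_mul (r ^ 2 * θ ^ l / α)) (fun t ht => ?_) measurableSet_Ioo
  exact (rpow_subst_one_div_one_add_rpow_div_pow_mul hα₀ hθ hr l ht.1).symm

theorem integral_one_div_one_add_rpow_div_pow_mul (l : ℕ) (hl : 1 ≤ l) (hα : 2 < α)
    (hθ : 0 < θ) (hr : 0 < r) :
    ∫ v in Ioi r, (1 / (1 + v ^ α / (θ * r ^ α))) ^ l * v = r ^ 2 / 2 * zFunL θ α l := by
  have hα₀ : 0 < α := by linarith
  rw [integral_Ioi_eq_rpow_subst hα₀ hr,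
    setIntegral_congr_fun measurableSet_Ioo
      (fun t ht => rpow_subst_one_div_one_add_rpow_div_pow_mul hα₀ hθ hr l ht.1),
    integral_const_mul, zFunL_eq_integral l hl hα]
  ring

end Kernel

theorem interference_integral_kth_power_general (k : ℕ) (α θ r s : ℝ)
    (hα : 2 < α) (hθ : 0 < θ) (hr : 0 < r) (hs : s = θ * r ^ α) :
    (∫ v in Set.Ioi r, (1 - (1 - 1 / (1 + v ^ α / s)) ^ k) * v) =
      r ^ 2 / 2 *
        ∑ l ∈ Finset.Icc 1 k, (k.choose l : ℝ) * (-1) ^ (l + 1) * zFunL θ α l := by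
  subst hs
  simp_rw [one_sub_one_sub_pow_eq_sum, Finset.sum_mul, mul_assoc]
  rw [integral_finsetSum _ fun l hl => ((integrableOn_one_div_one_add_rpow_div_pow_mul l
    (Finset.mem_Icc.mp hl).1 hα hθ hr).const_mul _).const_mul _, Finset.mul_sum]
  refine Finset.sum_congr rfl fun l hl => ?_
  rw [integral_const_mul, integral_const_mul,
    integral_one_div_one_add_rpow_div_pow_mul l (Finset.mem_Icc.mp hl).1 hα hθ hr]
  ring

/-- For integers `k ≥ 1`, `α > 2`, `θ > 0`, `r > 0`, with `s = θ r^α`: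
`∫_r^∞ (1 − (1 − 1/(1 + v^α/s))^k) v dv = (r²/2)·Σ_{l=1}^k C(k,l)(−1)^{l+1} 𝔷(θ,α,l)`. -/
theorem interference_integral_kth_power (k : ℕ) (hk : 1 ≤ k) (α θ r s : ℝ)
    (hα : 2 < α) (hθ : 0 < θ) (hr : 0 < r) (hs : s = θ * r ^ α) :
    (∫ v in Set.Ioi r, (1 - (1 - 1 / (1 + v ^ α / s)) ^ k) * v) =
      r ^ 2 / 2 *
        ∑ l ∈ Finset.Icc 1 k, (k.choose l : ℝ) * (-1) ^ (l + 1) * zFunL θ α l :=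
  interference_integral_kth_power_general k α θ r s hα hθ hr hs
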